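/- Let β > 0 and p a positive integer. The probability Ψ_β(p,0) that the β-biased monotonic random walk starting at the origin returns to meet the line y = px after departure equals 2(1 − (β/(β+1)) · (1/Φ_β(p,0))). In particular, if β ≥ p, then Ψ_β(p,0) = 2/(β+1). -/

import Mathlib

/-- A monotonic lattice path with `L` steps is encoded as `f : Fin L → Bool`,
where `true` is an up-step `(0,1)` and `false` is a right-step `(1,0)`.
`upsIn f k` is the number of up-steps among the first `k` steps. -/
def upsIn {L : ℕ} (f : Fin L → Bool) (k : ℕ) : ℕ :=
  (Finset.univ.filter (fun i : Fin L => (i : ℕ) < k ∧ f i = true)).card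

/-- The number of right-steps among the first `k` steps. -/
def rightsIn {L : ℕ} (f : Fin L → Bool) (k : ℕ) : ℕ :=
  (Finset.univ.filter (fun i : Fin L => (i : ℕ) < k ∧ f i = false)).card

/-- `weakCount p d n` is the number of monotonic lattice paths from `(0,0)` to
`(n, p*n + d)` all of whose lattice points lie weakly below the line `y = p*x + d`. -/
noncomputable def weakCount (p d n : ℕ) : ℕ :=
  Nat.card {f : Fin ((p + 1) * n + d) → Bool //
    upsIn f ((p + 1) * n + d) = p * n + d ∧
    ∀ k ≤ (p + 1) * n + d, upsIn f k ≤ p * rightsIn f k + d}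

/-- `strictCount p d n` is the number of monotonic lattice paths from `(0,0)` to
`(n, p*n + d)` all of whose lattice points, except the endpoints, lie strictly below
the line `y = p*x + d` (with the convention `strictCount p 0 0 = 0`). -/
noncomputable def strictCount (p d n : ℕ) : ℕ :=
  if n = 0 ∧ d = 0 then 0 else
  Nat.card {f : Fin ((p + 1) * n + d) → Bool //
    upsIn f ((p + 1) * n + d) = p * n + d ∧
    ∀ k, 0 < k → k < (p + 1) * n + d → upsIn f k < p * rightsIn f k + d}

/-- `crossProb β p d` is the probability `Φ_β(p,d)` that the `β`-biased monotonic random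
walk starting at the origin (moving right with probability `1/(β+1)` and up with
probability `β/(β+1)`) crosses the line `y = p*x + d`, i.e. meets a lattice point
`(n, p*n + d + 1)`.  Decomposing by the first lattice point above the line, this
probability equals `∑ₙ S(n,d) β^{pn+d+1}/(β+1)^{pn+n+d+1}`, where `S(n,d) = weakCount p d n`. -/
noncomputable def crossProb (β : ℝ) (p d : ℕ) : ℝ :=
  ∑' n : ℕ, (weakCount p d n : ℝ) * β ^ (p * n + d + 1) / (β + 1) ^ ((p + 1) * n + d + 1)

/-- `meetProb β p d` is the probability `Ψ_β(p,d)` that the `β`-biased monotonic random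
walk starting at the origin meets a lattice point on the line `y = p*x + d` after
departure.  For `d > 0`, decomposing by the first such lattice point `(n, p*n+d)` (reached
by a path strictly below the line except at its endpoint), this probability equals
`∑ₙ T(n,d) β^{pn+d}/(β+1)^{pn+n+d}`; for `d = 0`, by the reflection symmetry of first
meeting points it equals `2 ∑ₙ N(p,n) β^{pn}/(β+1)^{pn+n}`. -/
noncomputable def meetProb (β : ℝ) (p d : ℕ) : ℝ :=
  if d = 0 then 2 * ∑' n : ℕ, (strictCount p 0 n : ℝ) * β ^ (p * n) / (β + 1) ^ ((p + 1) * n)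
  else ∑' n : ℕ, (strictCount p d n : ℝ) * β ^ (p * n + d) / (β + 1) ^ ((p + 1) * n + d)

/-!
Paths are Boolean lists (`true` an up-step) and the `height` of a path is its endpoint's height
above the line `y = p x`. With `W_d(n) = weakCount p d n` and `T(n) = strictCount p 0 n`,
cutting a path at its first return to the line, at its first lattice point above the line, or
after its forced first right-step gives
`W_0(n) = ∑_{i+j=n} T(i) W_0(j)` for `n > 0`, `W_{d+1}(n) = ∑_{i+j=n} W_0(i) W_d(j)` and
`W_0(n+1) = W_p(n)`.
Weighting a path by `a^(#up) b^(#right)` with `a = β/(β+1)`, `b = 1/(β+1)`, the series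
`F_d = ∑ W_d(n) a^(pn+d) b^n` and `G = ∑ T(n) a^(pn) b^n` satisfy `F_0 = 1 + G F_0`,
`F_d = a^d F_0^(d+1)` and `F_0 = 1 + b a^p F_0^(p+1)`; the last two give by induction that the
partial sums of `F_0` stay below `1/a`, so everything converges.
Then `Ψ = 2G = 2(1 - 1/F_0)` and `Φ = a F_0`, so `Φ` is a root of `y^(p+1) - (β+1) y + β` in
`(0, 1]`, and for `β ≥ p` the only such root is `1`.
-/

open Finset

lemma card_filter_lt_eq_count_take_ofFn {L : ℕ} (f : Fin L → Bool) (b : Bool) (k : ℕ) :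
    #{i : Fin L | (i : ℕ) < k ∧ f i = b} = ((List.ofFn f).take k).count b := by
  induction L generalizing k with
  | zero => simp
  | succ L ih =>
    cases k with
    | zero => simp
    | succ k =>
      rw [Fin.card_filter_univ_succ', List.ofFn_succ, List.take_succ_cons, List.count_cons,
        ← ih (fun i => f i.succ), add_comm]
      simp

lemma upsIn_eq {L : ℕ} (f : Fin L → Bool) (k : ℕ) :
    upsIn f k = ((List.ofFn f).take k).count true :=
  card_filter_lt_eq_count_take_ofFn f true k

lemma rightsIn_eq {L : ℕ} (f : Fin L → Bool) (k : ℕ) :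
    rightsIn f k = ((List.ofFn f).take k).count false :=
  card_filter_lt_eq_count_take_ofFn f false k

lemma natCard_subtype_eq_of_ofFn {α : Type*} {L : ℕ} {Q : (Fin L → α) → Prop}
    {S : Set (List α)} (hlen : ∀ l ∈ S, l.length = L) (hQ : ∀ f, Q f ↔ List.ofFn f ∈ S) :
    Nat.card {f // Q f} = Nat.card S := by
  refine Nat.card_eq_of_bijective (fun f => ⟨List.ofFn f.1, (hQ _).1 f.2⟩)
    ⟨fun f g hfg => Subtype.ext (List.ofFn_injective (congrArg Subtype.val hfg)), ?_⟩
  rintro ⟨l, hl⟩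
  obtain rfl := hlen l hl
  exact ⟨⟨l.get, (hQ _).2 (by rwa [List.ofFn_get])⟩, Subtype.ext (List.ofFn_get l)⟩

section MinimalPrefix
variable {α : Type*} {Q : List α → Prop}

def IsMinimalPrefix (Q : List α → Prop) (s : List α) : Prop :=
  Q s ∧ ∀ k < s.length, ¬ Q (s.take k)

lemma exists_append_isMinimalPrefix {l : List α} (h : ∃ k, Q (l.take k)) :
    ∃ s w, l = s ++ w ∧ IsMinimalPrefix Q s := by
  classical
  refine ⟨l.take (Nat.find h), l.drop (Nat.find h), (List.take_append_drop _ _).symm,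
    Nat.find_spec h, fun k hk => ?_⟩
  have hk' : k < Nat.find h := hk.trans_le (List.length_take_le _ _)
  rw [List.take_take, min_eq_left hk'.le]
  exact Nat.find_min h hk'

lemma IsMinimalPrefix.append_inj {s s' w w' : List α} (hs : IsMinimalPrefix Q s)
    (hs' : IsMinimalPrefix Q s') (h : s ++ w = s' ++ w') : s = s' ∧ w = w' := by
  wlog hle : s.length ≤ s'.length generalizing s s' w w'
  · exact (this hs' hs h.symm (le_of_not_ge hle)).imp Eq.symm Eq.symm
  have hpre : s = s'.take s.length := by
    rw [← List.take_append_of_le_length hle, ← h, List.take_left' rfl]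
  have hlen : s.length = s'.length :=
    hle.eq_or_lt.resolve_right fun hlt => hs'.2 _ hlt (hpre ▸ hs.1)
  exact List.append_inj h hlen

end MinimalPrefix

lemma natCard_eq_sum_antidiagonal {α β γ : Type*} {A : ℕ → Set α} {B : ℕ → Set β} {C : Set γ}
    [∀ i, Finite (A i)] [∀ j, Finite (B j)] {n : ℕ} (join : α → β → γ)
    (maps_to : ∀ x ∈ antidiagonal n, ∀ a ∈ A x.1, ∀ b ∈ B x.2, join a b ∈ C)
    (inj : ∀ x ∈ antidiagonal n, ∀ y ∈ antidiagonal n, ∀ a ∈ A x.1, ∀ b ∈ B x.2,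
      ∀ a' ∈ A y.1, ∀ b' ∈ B y.2, join a b = join a' b' → x.1 = y.1 ∧ a = a' ∧ b = b')
    (surj : ∀ c ∈ C, ∃ x ∈ antidiagonal n, ∃ a ∈ A x.1, ∃ b ∈ B x.2, join a b = c) :
    Nat.card C = ∑ x ∈ antidiagonal n, Nat.card (A x.1) * Nat.card (B x.2) := by
  simp_rw [← Nat.card_prod]
  rw [← Finset.sum_coe_sort, ← Nat.card_sigma]
  symm
  refine Nat.card_eq_of_bijective
    (fun z => ⟨join z.2.1 z.2.2, maps_to _ z.1.2 _ z.2.1.2 _ z.2.2.2⟩) ⟨?_, ?_⟩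
  · rintro ⟨x, a, b⟩ ⟨y, a', b'⟩ hab
    obtain ⟨hxy, haa, hbb⟩ := inj _ x.2 _ y.2 _ a.2 _ b.2 _ a'.2 _ b'.2 (congrArg Subtype.val hab)
    obtain rfl : x = y := Finset.HasAntidiagonal.antidiagonal_subtype_ext hxy
    obtain rfl := Subtype.ext haa
    obtain rfl := Subtype.ext hbb
    rfl
  · rintro ⟨c, hc⟩
    obtain ⟨x, hx, a, ha, b, hb, rfl⟩ := surj c hc
    exact ⟨⟨⟨x, hx⟩, ⟨a, ha⟩, ⟨b, hb⟩⟩, rfl⟩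

def height (p : ℕ) (l : List Bool) : ℤ := l.count true - p * l.count false

def StaysBelow (p : ℕ) (c : ℤ) (l : List Bool) : Prop := ∀ k, height p (l.take k) ≤ c

section Paths

variable {p : ℕ}

@[simp] lemma height_nil : height p [] = 0 := by simp [height]

lemma height_append (s w : List Bool) : height p (s ++ w) = height p s + height p w := by
  simp only [height, List.count_append]; push_cast; ring

@[simp] lemma height_singleton_true : height p [true] = 1 := by simp [height]

@[simp] lemma height_singleton_false : height p [false] = -p := by simp [height]

lemma height_take_add (l : List Bool) (j k : ℕ) :
    height p (l.take (j + k)) = height p (l.take j) + height p ((l.drop j).take k) := by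
  rw [List.take_add, height_append]

lemma height_take_of_length_le {l : List Bool} {k : ℕ} (h : l.length ≤ k) :
    height p (l.take k) = height p l := by
  rw [List.take_of_length_le h]

lemma StaysBelow.mono {c c' : ℤ} {l : List Bool} (h : StaysBelow p c l) (hc : c ≤ c') :
    StaysBelow p c' l := fun k => (h k).trans hc

lemma StaysBelow.height_le {c : ℤ} {l : List Bool} (h : StaysBelow p c l) : height p l ≤ c := by
  simpa using h l.length

lemma StaysBelow.take {c : ℤ} {l : List Bool} (h : StaysBelow p c l) (j : ℕ) :
    StaysBelow p c (l.take j) := fun k => by rw [List.take_take]; exact h _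

lemma StaysBelow.drop {c : ℤ} {l : List Bool} (h : StaysBelow p c l) (j : ℕ) :
    StaysBelow p (c - height p (l.take j)) (l.drop j) := fun k => by
  have := h (j + k); rw [height_take_add] at this; linarith

lemma StaysBelow.append {c e : ℤ} {s w : List Bool} (hs : StaysBelow p c s)
    (hw : StaysBelow p e w) (hc : height p s + e ≤ c) : StaysBelow p c (s ++ w) := fun k => by
  rw [List.take_append, height_append]
  rcases le_total k s.length with hk | hk
  · simpa [Nat.sub_eq_zero_of_le hk] using hs k
  · rw [height_take_of_length_le hk]; linarith [hw (k - s.length)]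

lemma height_cons (b : Bool) (l : List Bool) : height p (b :: l) = height p [b] + height p l :=
  height_append [b] l

lemma staysBelow_singleton {b : Bool} {c : ℤ} (hc : 0 ≤ c) (hb : height p [b] ≤ c) :
    StaysBelow p c [b] := by
  intro k; cases k <;> simpa

lemma height_le_iff {t : List Bool} {c : ℕ} :
    height p t ≤ c ↔ t.count true ≤ p * t.count false + c := by
  simp only [height]; omega

lemma height_neg_iff {t : List Bool} : height p t < 0 ↔ t.count true < p * t.count false := by
  simp only [height]; omega

lemma staysBelow_iff {c : ℤ} {l : List Bool} :
    StaysBelow p c l ↔ ∀ k ≤ l.length, height p (l.take k) ≤ c := by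
  refine ⟨fun h k _ => h k, fun h k => ?_⟩
  rcases le_total k l.length with hk | hk
  · exact h k hk
  · simpa [List.take_of_length_le hk] using h _ le_rfl

lemma StaysBelow.left_of_append {c : ℤ} {s w : List Bool} (h : StaysBelow p c (s ++ w)) :
    StaysBelow p c s := by
  simpa [List.take_left'] using h.take s.length

lemma StaysBelow.right_of_append {c : ℤ} {s w : List Bool} (h : StaysBelow p c (s ++ w)) :
    StaysBelow p (c - height p s) w := by
  simpa [List.drop_left', List.take_left'] using h.drop s.length

def weakPaths (p d n : ℕ) : Set (List Bool) :=
  {l | l.count false = n ∧ height p l = d ∧ StaysBelow p d l}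

-- `l ≠ []` matches the convention `strictCount p 0 0 = 0`.
def strictPaths (p n : ℕ) : Set (List Bool) :=
  {l | l ≠ [] ∧ l.count false = n ∧ height p l = 0 ∧
    ∀ k, 0 < k → k < l.length → height p (l.take k) < 0}

lemma length_eq_of_count_false_of_height {d n : ℕ} {l : List Bool} (hn : l.count false = n)
    (hd : height p l = d) : l.length = (p + 1) * n + d := by
  subst hn
  have hsum := List.count_true_add_count_false l
  simp only [height] at hd
  zify at hsum ⊢
  linear_combination hd - hsum

lemma finite_weakPaths (p d n : ℕ) : (weakPaths p d n).Finite :=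
  (List.finite_length_eq Bool ((p + 1) * n + d)).subset fun _ hl =>
    length_eq_of_count_false_of_height hl.1 hl.2.1

instance (d n : ℕ) : Finite (weakPaths p d n) := (finite_weakPaths p d n).to_subtype

lemma StaysBelow.of_mem_strictPaths {n : ℕ} {s : List Bool} (hs : s ∈ strictPaths p n) :
    StaysBelow p 0 s := by
  obtain ⟨-, -, h0, hlt⟩ := hs
  refine staysBelow_iff.2 fun k hk => ?_
  rcases Nat.eq_zero_or_pos k with rfl | hk0
  · simp
  rcases hk.lt_or_eq with hk | rfl
  · exact (hlt k hk0 hk).le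
  · simp [h0]

instance (n : ℕ) : Finite (strictPaths p n) :=
  Set.Finite.to_subtype <| (finite_weakPaths p 0 n).subset fun _ hs =>
    ⟨hs.2.1, by simpa using hs.2.2.1, by simpa using StaysBelow.of_mem_strictPaths hs⟩

lemma weakCount_eq_card (p d n : ℕ) : weakCount p d n = Nat.card (weakPaths p d n) := by
  refine natCard_subtype_eq_of_ofFn (fun l hl => length_eq_of_count_false_of_height hl.1 hl.2.1)
    fun f => ?_
  simp only [upsIn_eq, rightsIn_eq]
  set l := List.ofFn f
  have hlen : l.length = (p + 1) * n + d := List.length_ofFn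
  have hsum := List.count_true_add_count_false l
  rw [← hlen, List.take_length]
  constructor
  · rintro ⟨htot, hle⟩
    have hn : l.count false = n := by
      rw [hlen, htot, add_mul, one_mul] at hsum; omega
    have hd : height p l = d := by simp only [height]; rw [htot, hn]; push_cast; ring
    refine ⟨hn, hd, fun k => ?_⟩
    rcases le_total k l.length with hk | hk
    · exact height_le_iff.2 (hle k hk)
    · rw [height_take_of_length_le hk, hd]
  · rintro ⟨hn, hd, hbelow⟩
    refine ⟨?_, fun k _ => height_le_iff.1 (hbelow k)⟩
    simp only [height] at hd
    rw [hn] at hd; omega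

lemma strictPaths_zero : strictPaths p 0 = ∅ := by
  refine Set.eq_empty_of_forall_notMem fun l ⟨hne, hn, h0, _⟩ => hne ?_
  have := length_eq_of_count_false_of_height (d := 0) hn (by simpa using h0)
  simpa using this

lemma strictCount_eq_card (p n : ℕ) : strictCount p 0 n = Nat.card (strictPaths p n) := by
  rcases Nat.eq_zero_or_pos n with rfl | hn0
  · simp [strictCount, strictPaths_zero]
  rw [strictCount, if_neg (by omega)]
  refine natCard_subtype_eq_of_ofFn
    (fun l hl => length_eq_of_count_false_of_height hl.2.1 (by simpa using hl.2.2.1)) fun f => ?_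
  simp only [upsIn_eq, rightsIn_eq]
  set l := List.ofFn f
  have hlen : l.length = (p + 1) * n + 0 := List.length_ofFn
  have hsum := List.count_true_add_count_false l
  rw [← hlen, List.take_length]
  constructor
  · rintro ⟨htot, hlt⟩
    have hn : l.count false = n := by
      rw [hlen, htot, add_mul, one_mul] at hsum; omega
    refine ⟨List.ne_nil_of_length_pos (by rw [hlen]; positivity), hn, ?_,
      fun k hk hkl => height_neg_iff.2 (hlt k hk hkl)⟩
    simp only [height]; rw [htot, hn]; push_cast; ring
  · rintro ⟨-, hn, h0, hlt⟩
    refine ⟨?_, fun k hk hkl => height_neg_iff.1 (hlt k hk hkl)⟩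
    simp only [height] at h0
    rw [hn] at h0; omega

lemma weakPaths_zero_zero : weakPaths p 0 0 = {[]} := by
  ext l
  refine ⟨fun ⟨hn, hd, _⟩ => ?_, ?_⟩
  · simpa using length_eq_of_count_false_of_height hn hd
  · rintro rfl; exact ⟨rfl, by simp, fun k => by simp⟩

lemma weakCount_zero_zero : weakCount p 0 0 = 1 := by
  simp [weakCount_eq_card, weakPaths_zero_zero]

lemma weakPaths_zero_succ (n : ℕ) :
    weakPaths p 0 (n + 1) = List.cons false '' weakPaths p p n := by
  ext l
  constructor
  · rintro ⟨hn, hd, hbelow⟩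
    obtain _ | ⟨b, t⟩ := l
    · simp at hn
    cases b
    · have hbelow' := StaysBelow.right_of_append (s := [false]) hbelow
      rw [height_cons] at hd
      refine ⟨t, ⟨by simpa using hn, ?_, ?_⟩, rfl⟩
      · simp at hd; linarith
      · simpa using hbelow'
    · simpa using hbelow 1
  · rintro ⟨t, ⟨hn, hd, hbelow⟩, rfl⟩
    refine ⟨by simpa using hn, by rw [height_cons, hd]; simp, ?_⟩
    exact StaysBelow.append (s := [false]) (staysBelow_singleton le_rfl (by simp)) hbelow (by simp)

lemma weakCount_zero_succ (n : ℕ) : weakCount p 0 (n + 1) = weakCount p p n := by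
  rw [weakCount_eq_card, weakCount_eq_card, weakPaths_zero_succ,
    Nat.card_image_of_injective (List.cons_injective)]

lemma isMinimalPrefix_height_pos_iff {s : List Bool} :
    IsMinimalPrefix (fun t => 0 < height p t) s ↔
      ∃ g, s = g ++ [true] ∧ StaysBelow p 0 g ∧ height p g = 0 := by
  constructor
  · rintro ⟨hpos, hmin⟩
    obtain rfl | ⟨g, b, rfl⟩ := List.eq_nil_or_concat s
    · simp at hpos
    rw [List.concat_eq_append] at hpos hmin ⊢
    have hg : StaysBelow p 0 g := staysBelow_iff.2 fun k hk => by
      have := hmin k (by simp; omega)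
      rwa [List.take_append_of_le_length hk, not_lt] at this
    have hg0 := hg.height_le
    rw [height_append] at hpos
    cases b
    · simp at hpos; omega
    · exact ⟨g, rfl, hg, by simp at hpos; omega⟩
  · rintro ⟨g, rfl, hg, hg0⟩
    refine ⟨by simp [height_append, hg0], fun k hk => ?_⟩
    rw [List.take_append_of_le_length (by simpa [Nat.lt_succ_iff] using hk), not_lt]
    exact hg k

lemma weakCount_succ (d n : ℕ) :
    weakCount p (d + 1) n =
      ∑ x ∈ antidiagonal n, weakCount p 0 x.1 * weakCount p d x.2 := by
  simp only [weakCount_eq_card]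
  refine natCard_eq_sum_antidiagonal (fun g h => g ++ true :: h) ?_ ?_ ?_
  · rintro x hx g ⟨hgn, hg0, hg⟩ h ⟨hhn, hhd, hh⟩
    refine ⟨by simp [List.count_append, hgn, hhn, (mem_antidiagonal.1 hx)], ?_, ?_⟩
    · simp [height_append, height_cons (l := h), hg0, hhd]; ring
    · have htrue : StaysBelow p (d + 1 : ℕ) (true :: h) := StaysBelow.append (s := [true])
        (staysBelow_singleton (by positivity) (by simp)) hh (by simp [add_comm])
      exact (hg.mono (by positivity)).append htrue (by simp [hg0])
  · rintro x - y - g ⟨hgn, hg0, hg⟩ h - g' ⟨hg'n, hg'0, hg'⟩ h' - hgh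
    rw [List.append_cons g, List.append_cons g'] at hgh
    obtain ⟨hgg, rfl⟩ := (isMinimalPrefix_height_pos_iff.2 ⟨g, rfl, hg, hg0⟩).append_inj
      (isMinimalPrefix_height_pos_iff.2 ⟨g', rfl, hg', hg'0⟩) hgh
    obtain rfl := List.append_cancel_right hgg
    exact ⟨hgn.symm.trans hg'n, rfl, rfl⟩
  · rintro l ⟨hn, hd, hbelow⟩
    obtain ⟨s, w, rfl, hs⟩ := exists_append_isMinimalPrefix (Q := fun t => 0 < height p t) (l := l)
      ⟨l.length, by simp only [List.take_length, hd]; positivity⟩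
    obtain ⟨g, rfl, hg, hg0⟩ := isMinimalPrefix_height_pos_iff.1 hs
    have hgt : height p (g ++ [true]) = 1 := by simp [height_append, hg0]
    rw [height_append, hgt] at hd
    have hw := hbelow.right_of_append
    rw [hgt] at hw
    refine ⟨(g.count false, w.count false),
      mem_antidiagonal.2 (by simpa [List.count_append] using hn), g, ⟨rfl, by simpa using hg0, by simpa using hg⟩, w, ⟨rfl, ?_, ?_⟩, by simp⟩
    · push_cast at hd; linarith
    · convert hw using 1; push_cast; ring

lemma isMinimalPrefix_of_mem_strictPaths {n : ℕ} {s : List Bool} (hs : s ∈ strictPaths p n) :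
    IsMinimalPrefix (fun t => t ≠ [] ∧ height p t = 0) s := by
  obtain ⟨hne, -, h0, hlt⟩ := hs
  refine ⟨⟨hne, h0⟩, fun k hk ⟨hk0, hkh⟩ => ?_⟩
  have := hlt k (Nat.pos_of_ne_zero (by rintro rfl; simp at hk0)) hk
  omega

lemma mem_strictPaths_of_isMinimalPrefix {s : List Bool}
    (hs : IsMinimalPrefix (fun t => t ≠ [] ∧ height p t = 0) s) (hbelow : StaysBelow p 0 s) :
    s ∈ strictPaths p (s.count false) := by
  obtain ⟨⟨hne, h0⟩, hmin⟩ := hs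
  refine ⟨hne, rfl, h0, fun k hk0 hk => lt_of_le_of_ne (hbelow k) fun hkh => hmin k hk ⟨?_, hkh⟩⟩
  exact List.ne_nil_of_length_pos (by simp; omega)

lemma weakCount_zero_eq_sum {n : ℕ} (hn : 0 < n) :
    weakCount p 0 n = ∑ x ∈ antidiagonal n, strictCount p 0 x.1 * weakCount p 0 x.2 := by
  simp only [weakCount_eq_card, strictCount_eq_card]
  refine natCard_eq_sum_antidiagonal (· ++ ·) ?_ ?_ ?_
  · rintro x hx s hs w ⟨hwn, hw0, hw⟩
    refine ⟨by simp [List.count_append, hs.2.1, hwn, (mem_antidiagonal.1 hx)], ?_, ?_⟩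
    · simp [height_append, hs.2.2.1, hw0]
    · exact StaysBelow.append (StaysBelow.of_mem_strictPaths hs) hw (by simp [hs.2.2.1])
  · rintro x - y - s hs w - s' hs' w' - hsw
    obtain ⟨rfl, rfl⟩ := (isMinimalPrefix_of_mem_strictPaths hs).append_inj
      (isMinimalPrefix_of_mem_strictPaths hs') hsw
    exact ⟨hs.2.1.symm.trans hs'.2.1, rfl, rfl⟩
  · rintro l ⟨hln, hl0, hbelow⟩
    obtain ⟨s, w, rfl, hs⟩ := exists_append_isMinimalPrefix
      (Q := fun t => t ≠ [] ∧ height p t = 0) (l := l) ⟨l.length, by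
        simp only [List.take_length, hl0]
        exact ⟨by rintro rfl; simp at hln; omega, by simp⟩⟩
    have hs0 := hs.1.2
    rw [height_append, hs0] at hl0
    have hw := hbelow.right_of_append
    rw [hs0] at hw
    refine ⟨(s.count false, w.count false),
      mem_antidiagonal.2 (by simpa [List.count_append] using hln), s, mem_strictPaths_of_isMinimalPrefix hs hbelow.left_of_append, w, ⟨rfl, ?_, ?_⟩, rfl⟩
    · simpa using hl0
    · simpa using hw

end Paths

lemma sum_range_sum_antidiagonal_le {f g : ℕ → ℝ} (hf : ∀ n, 0 ≤ f n) (hg : ∀ n, 0 ≤ g n)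
    (N : ℕ) : ∑ n ∈ range N, ∑ x ∈ antidiagonal n, f x.1 * g x.2 ≤
      (∑ n ∈ range N, f n) * ∑ n ∈ range N, g n := by
  simp_rw [Nat.sum_antidiagonal_eq_sum_range_succ (fun i j => f i * g j), Finset.range_eq_Ico,
    ← Finset.sum_Ico_Ico_comm, Finset.sum_mul, ← Finset.mul_sum]
  gcongr with i
  · exact hf i
  rw [Finset.sum_Ico_eq_sum_range]
  simp only [add_tsub_cancel_left, ← Finset.range_eq_Ico]
  exact Finset.sum_le_sum_of_subset_of_nonneg (Finset.range_subset_range.2 (Nat.sub_le _ _))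
    fun n _ _ => hg n

noncomputable def weakTerm (a b : ℝ) (p d n : ℕ) : ℝ :=
  weakCount p d n * (a ^ (p * n + d) * b ^ n)

noncomputable def strictTerm (a b : ℝ) (p n : ℕ) : ℝ :=
  strictCount p 0 n * (a ^ (p * n) * b ^ n)

section Series

variable {a b : ℝ} {p : ℕ}

lemma weakTerm_nonneg (ha : 0 ≤ a) (hb : 0 ≤ b) (d n : ℕ) : 0 ≤ weakTerm a b p d n := by
  unfold weakTerm; positivity

lemma strictTerm_nonneg (ha : 0 ≤ a) (hb : 0 ≤ b) (n : ℕ) : 0 ≤ strictTerm a b p n := by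
  unfold strictTerm; positivity

lemma weakTerm_zero_zero : weakTerm a b p 0 0 = 1 := by simp [weakTerm, weakCount_zero_zero]

lemma strictTerm_zero : strictTerm a b p 0 = 0 := by
  simp [strictTerm, strictCount_eq_card, strictPaths_zero]

lemma weakTerm_zero_succ (n : ℕ) : weakTerm a b p 0 (n + 1) = b * weakTerm a b p p n := by
  simp only [weakTerm, weakCount_zero_succ]; ring

lemma weakTerm_succ (d n : ℕ) : weakTerm a b p (d + 1) n =
    a * ∑ x ∈ antidiagonal n, weakTerm a b p 0 x.1 * weakTerm a b p d x.2 := by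
  rw [weakTerm, weakCount_succ, Nat.cast_sum, Finset.sum_mul, Finset.mul_sum]
  refine Finset.sum_congr rfl fun x hx => ?_
  rw [← mem_antidiagonal.1 hx]
  simp only [weakTerm]; push_cast; ring

lemma weakTerm_zero_eq_sum {n : ℕ} (hn : 0 < n) : weakTerm a b p 0 n =
    ∑ x ∈ antidiagonal n, strictTerm a b p x.1 * weakTerm a b p 0 x.2 := by
  rw [weakTerm, weakCount_zero_eq_sum hn, Nat.cast_sum, Finset.sum_mul]
  refine Finset.sum_congr rfl fun x hx => ?_
  rw [← mem_antidiagonal.1 hx]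
  simp only [weakTerm, strictTerm]; push_cast; ring

lemma sum_range_weakTerm_le (ha : 0 ≤ a) (hb : 0 ≤ b) (d N : ℕ) :
    ∑ n ∈ range N, weakTerm a b p d n ≤ a ^ d * (∑ n ∈ range N, weakTerm a b p 0 n) ^ (d + 1) := by
  induction d with
  | zero => simp
  | succ d ih =>
    have hS := Finset.sum_nonneg fun n (_ : n ∈ range N) => weakTerm_nonneg (p := p) ha hb 0 n
    calc ∑ n ∈ range N, weakTerm a b p (d + 1) n
        = a * ∑ n ∈ range N, ∑ x ∈ antidiagonal n, weakTerm a b p 0 x.1 * weakTerm a b p d x.2 := by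
          simp only [weakTerm_succ, Finset.mul_sum]
      _ ≤ a * ((∑ n ∈ range N, weakTerm a b p 0 n) * ∑ n ∈ range N, weakTerm a b p d n) := by
          gcongr
          exact sum_range_sum_antidiagonal_le (weakTerm_nonneg ha hb 0) (weakTerm_nonneg ha hb d) N
      _ ≤ a * ((∑ n ∈ range N, weakTerm a b p 0 n) *
            (a ^ d * (∑ n ∈ range N, weakTerm a b p 0 n) ^ (d + 1))) := by gcongr
      _ = a ^ (d + 1) * (∑ n ∈ range N, weakTerm a b p 0 n) ^ (d + 1 + 1) := by ring

lemma sum_range_weakTerm_zero_le (ha : 0 < a) (hb : 0 ≤ b) (hab : a + b ≤ 1) (N : ℕ) :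
    ∑ n ∈ range N, weakTerm a b p 0 n ≤ a⁻¹ := by
  induction N with
  | zero => simp [ha.le]
  | succ N ih =>
    set S := ∑ n ∈ range N, weakTerm a b p 0 n
    have hS : 0 ≤ S := Finset.sum_nonneg fun n _ => weakTerm_nonneg ha.le hb 0 n
    have haS : a * S ≤ 1 := by simpa [ha.ne'] using mul_le_mul_of_nonneg_left ih ha.le
    calc ∑ n ∈ range (N + 1), weakTerm a b p 0 n
        = 1 + b * ∑ n ∈ range N, weakTerm a b p p n := by
          simp [Finset.sum_range_succ', weakTerm_zero_succ, weakTerm_zero_zero, Finset.mul_sum,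
            add_comm]
      _ ≤ 1 + b * (a ^ p * S ^ (p + 1)) := by gcongr; exact sum_range_weakTerm_le ha.le hb p N
      _ = 1 + b * ((a * S) ^ p * S) := by ring
      _ ≤ 1 + b * (1 * a⁻¹) := by gcongr; exact pow_le_one₀ (by positivity) haS
      _ = (a + b) * a⁻¹ := by field_simp
      _ ≤ a⁻¹ := mul_le_of_le_one_left (inv_nonneg.2 ha.le) hab

lemma summable_weakTerm (ha : 0 < a) (hb : 0 ≤ b) (hab : a + b ≤ 1) (d : ℕ) :
    Summable (weakTerm a b p d) :=
  summable_of_sum_range_le (c := a ^ d * a⁻¹ ^ (d + 1)) (weakTerm_nonneg ha.le hb d) fun N =>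
    (sum_range_weakTerm_le ha.le hb d N).trans <| by
      gcongr
      · exact Finset.sum_nonneg fun n _ => weakTerm_nonneg ha.le hb 0 n
      · exact sum_range_weakTerm_zero_le ha hb hab N

lemma strictTerm_le_weakTerm (ha : 0 ≤ a) (hb : 0 ≤ b) (n : ℕ) :
    strictTerm a b p n ≤ weakTerm a b p 0 n := by
  rcases Nat.eq_zero_or_pos n with rfl | hn
  · simp [strictTerm_zero, weakTerm_zero_zero]
  rw [weakTerm_zero_eq_sum hn]
  simpa [weakTerm_zero_zero] using Finset.single_le_sum
    (f := fun x : ℕ × ℕ => strictTerm a b p x.1 * weakTerm a b p 0 x.2)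
    (fun x _ => mul_nonneg (strictTerm_nonneg ha hb _) (weakTerm_nonneg ha hb 0 _))
    (mem_antidiagonal.2 (add_zero n) : (n, 0) ∈ antidiagonal n)

lemma summable_strictTerm (ha : 0 < a) (hb : 0 ≤ b) (hab : a + b ≤ 1) :
    Summable (strictTerm a b p) :=
  (summable_weakTerm ha hb hab 0).of_nonneg_of_le (strictTerm_nonneg ha.le hb)
    (strictTerm_le_weakTerm ha.le hb)

lemma one_le_tsum_weakTerm_zero (ha : 0 < a) (hb : 0 ≤ b) (hab : a + b ≤ 1) :
    1 ≤ ∑' n, weakTerm a b p 0 n := by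
  simpa [weakTerm_zero_zero] using
    (summable_weakTerm ha hb hab 0).le_tsum 0 fun n _ => weakTerm_nonneg ha.le hb 0 n

lemma tsum_weakTerm_zero_le (ha : 0 < a) (hb : 0 ≤ b) (hab : a + b ≤ 1) :
    ∑' n, weakTerm a b p 0 n ≤ a⁻¹ :=
  (summable_weakTerm ha hb hab 0).tsum_le_of_sum_range_le (sum_range_weakTerm_zero_le ha hb hab)

lemma tsum_weakTerm (ha : 0 < a) (hb : 0 ≤ b) (hab : a + b ≤ 1) (d : ℕ) :
    ∑' n, weakTerm a b p d n = a ^ d * (∑' n, weakTerm a b p 0 n) ^ (d + 1) := by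
  induction d with
  | zero => simp
  | succ d ih =>
    have h0 := summable_weakTerm (p := p) ha hb hab 0
    have hd := summable_weakTerm (p := p) ha hb hab d
    rw [tsum_congr (weakTerm_succ d), tsum_mul_left, ← h0.tsum_mul_tsum_eq_tsum_sum_antidiagonal hd
      (h0.mul_of_nonneg hd (weakTerm_nonneg ha.le hb 0) (weakTerm_nonneg ha.le hb d)), ih]
    ring

lemma tsum_weakTerm_zero_eq_one_add_mul_pow (ha : 0 < a) (hb : 0 ≤ b) (hab : a + b ≤ 1) :
    ∑' n, weakTerm a b p 0 n = 1 + b * a ^ p * (∑' n, weakTerm a b p 0 n) ^ (p + 1) := by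
  have h := (summable_weakTerm (p := p) ha hb hab 0).tsum_eq_zero_add
  rwa [weakTerm_zero_zero, tsum_congr weakTerm_zero_succ, tsum_mul_left,
    tsum_weakTerm ha hb hab p, ← mul_assoc] at h

lemma tsum_weakTerm_zero_eq_one_add_mul (ha : 0 < a) (hb : 0 ≤ b) (hab : a + b ≤ 1) :
    ∑' n, weakTerm a b p 0 n =
      1 + (∑' n, strictTerm a b p n) * ∑' n, weakTerm a b p 0 n := by
  have hS := summable_strictTerm (p := p) ha hb hab
  have hW := summable_weakTerm (p := p) ha hb hab 0
  have hSW := hS.mul_of_nonneg hW (strictTerm_nonneg ha.le hb) (weakTerm_nonneg ha.le hb 0)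
  rw [hS.tsum_mul_tsum_eq_tsum_sum_antidiagonal hW hSW,
    (summable_sum_mul_antidiagonal_of_summable_mul hSW).tsum_eq_zero_add, hW.tsum_eq_zero_add,
    weakTerm_zero_zero]
  simp [strictTerm_zero, weakTerm_zero_eq_sum]

lemma tsum_strictTerm_eq_one_sub_inv (ha : 0 < a) (hb : 0 ≤ b) (hab : a + b ≤ 1) :
    ∑' n, strictTerm a b p n = 1 - (∑' n, weakTerm a b p 0 n)⁻¹ := by
  have hret := tsum_weakTerm_zero_eq_one_add_mul (p := p) ha hb hab
  have hA := (zero_lt_one.trans_le (one_le_tsum_weakTerm_zero (p := p) ha hb hab)).ne'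
  field_simp
  linear_combination -hret

end Series

lemma eq_one_of_pow_succ_sub_mul_add_eq_zero {β y : ℝ} {p : ℕ} (hβ : 0 < β) (hpβ : (p : ℝ) ≤ β)
    (hy0 : 0 ≤ y) (hy1 : y ≤ 1) (h : y ^ (p + 1) - (β + 1) * y + β = 0) : y = 1 := by
  by_contra hne
  have hlt : y < 1 := lt_of_le_of_ne hy1 hne
  have hfac : y ^ (p + 1) - (β + 1) * y + β = (y - 1) * (y * ∑ i ∈ range p, y ^ i - β) := by
    linear_combination (-y) * geom_sum_mul y p
  have hsum : y * ∑ i ∈ range p, y ^ i < β :=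
    calc y * ∑ i ∈ range p, y ^ i ≤ y * p := by
          gcongr
          simpa using Finset.sum_le_card_nsmul (range p) _ 1 fun i _ => pow_le_one₀ hy0 hy1
      _ ≤ y * β := by gcongr
      _ < β := by nlinarith
  rw [hfac] at h
  nlinarith

section Walk

variable {β : ℝ}

lemma crossProb_zero_eq_mul_tsum (hβ : β + 1 ≠ 0) (p : ℕ) :
    crossProb β p 0 = β / (β + 1) * ∑' n, weakTerm (β / (β + 1)) (β + 1)⁻¹ p 0 n := by
  rw [crossProb, ← tsum_mul_left]
  refine tsum_congr fun n => ?_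
  simp only [weakTerm, div_pow, inv_pow]
  field_simp
  ring

lemma meetProb_zero_eq_two_mul_tsum (hβ : β + 1 ≠ 0) (p : ℕ) :
    meetProb β p 0 = 2 * ∑' n, strictTerm (β / (β + 1)) (β + 1)⁻¹ p n := by
  rw [meetProb, if_pos rfl]
  congr 1
  refine tsum_congr fun n => ?_
  simp only [strictTerm, div_pow, inv_pow]
  field_simp
  ring

lemma div_add_inv_eq_one (hβ : β + 1 ≠ 0) : β / (β + 1) + (β + 1)⁻¹ = 1 := by field_simp

lemma meetProb_zero_eq_two_mul_one_sub (hβ : 0 < β) (p : ℕ) :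
    meetProb β p 0 = 2 * (1 - β / (β + 1) * (1 / crossProb β p 0)) := by
  have hab := (div_add_inv_eq_one (β := β) (by positivity)).le
  rw [meetProb_zero_eq_two_mul_tsum (by positivity),
    tsum_strictTerm_eq_one_sub_inv (by positivity) (by positivity) hab,
    crossProb_zero_eq_mul_tsum (by positivity), one_div, mul_inv, ← mul_assoc,
    mul_inv_cancel₀ (by positivity), one_mul]

lemma crossProb_zero_pos (hβ : 0 < β) (p : ℕ) : 0 < crossProb β p 0 := by
  rw [crossProb_zero_eq_mul_tsum (by positivity)]
  have hab := (div_add_inv_eq_one (β := β) (by positivity)).le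
  have := one_le_tsum_weakTerm_zero (p := p) (by positivity) (by positivity) hab
  positivity

lemma crossProb_zero_le_one (hβ : 0 < β) (p : ℕ) : crossProb β p 0 ≤ 1 := by
  rw [crossProb_zero_eq_mul_tsum (by positivity)]
  have hab := (div_add_inv_eq_one (β := β) (by positivity)).le
  have := tsum_weakTerm_zero_le (p := p) (by positivity) (by positivity) hab
  exact (mul_le_mul_of_nonneg_left this (by positivity)).trans_eq (mul_inv_cancel₀ (by positivity))

lemma crossProb_zero_eq_add_mul_pow (hβ : 0 < β) (p : ℕ) :
    crossProb β p 0 = β / (β + 1) + (β + 1)⁻¹ * crossProb β p 0 ^ (p + 1) := by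
  have hab := (div_add_inv_eq_one (β := β) (by positivity)).le
  rw [crossProb_zero_eq_mul_tsum (by positivity)]
  linear_combination (β / (β + 1)) *
    tsum_weakTerm_zero_eq_one_add_mul_pow (p := p) (by positivity) (by positivity) hab

lemma crossProb_zero_pow_succ_sub (hβ : 0 < β) (p : ℕ) :
    crossProb β p 0 ^ (p + 1) - (β + 1) * crossProb β p 0 + β = 0 := by
  have e1 : (β + 1) * (β / (β + 1)) = β := by field_simp
  have e2 : (β + 1) * (β + 1)⁻¹ = 1 := by field_simp
  linear_combination (-(β + 1)) * crossProb_zero_eq_add_mul_pow hβ p -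
    crossProb β p 0 ^ (p + 1) * e2 - e1

end Walk

theorem meetProb_zero_eq_general (β : ℝ) (hβ : 0 < β) (p : ℕ) :
    meetProb β p 0 = 2 * (1 - β / (β + 1) * (1 / crossProb β p 0)) ∧
    ((p : ℝ) ≤ β → meetProb β p 0 = 2 / (β + 1)) := by
  refine ⟨meetProb_zero_eq_two_mul_one_sub hβ p, fun hpβ => ?_⟩
  rw [meetProb_zero_eq_two_mul_one_sub hβ p, eq_one_of_pow_succ_sub_mul_add_eq_zero hβ hpβ
    (crossProb_zero_pos hβ p).le (crossProb_zero_le_one hβ p) (crossProb_zero_pow_succ_sub hβ p)]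
  field_simp
  ring

theorem meetProb_zero_eq (β : ℝ) (hβ : 0 < β) (p : ℕ) (hp : 0 < p) :
    meetProb β p 0 = 2 * (1 - β / (β + 1) * (1 / crossProb β p 0)) ∧
    ((p : ℝ) ≤ β → meetProb β p 0 = 2 / (β + 1)) :=
  meetProb_zero_eq_general β hβ p
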